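/- arXiv:2402.18279 — 5 statements merged into one kernel-verified Lean document; each statement's English description precedes it below -/
import Mathlib

section
/- Let (x_n) be a sequence of real numbers satisfying x_n = a·x_{n-1} + b·x_{n-2} + c·x_{n-3} for n ≥ 4, where a, b, c > 0, and let γ > 1 be a real root of X³ - aX² - bX - c. If γ^{-1} ≤ x_1 ≤ 1 ≤ x_2 ≤ γ ≤ x_3 ≤ γ², then for all n ≥ 1, γ^{n-2} ≤ x_n ≤ γ^{n-1}. -/
theorem stmt_1 (x : ℕ → ℝ) (a b c γ : ℝ)
    (ha : 0 < a) (hb : 0 < b) (hc : 0 < c) (hγ : 1 < γ)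
    (hroot : γ ^ 3 = a * γ ^ 2 + b * γ + c)
    (hrec : ∀ n ≥ 4, x n = a * x (n - 1) + b * x (n - 2) + c * x (n - 3))
    (h1 : γ⁻¹ ≤ x 1) (h1' : x 1 ≤ 1) (h2 : x 2 ≤ γ) (h2' : 1 ≤ x 2)
    (h3 : γ ≤ x 3) (h3' : x 3 ≤ γ ^ 2) :
    ∀ n : ℕ, 1 ≤ n → γ ^ ((n : ℤ) - 2) ≤ x n ∧ x n ≤ γ ^ ((n : ℤ) - 1) := by
  have hγ0 : (0:ℝ) < γ := lt_trans one_pos hγ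
  have hne : γ ≠ 0 := ne_of_gt hγ0
  intro n
  induction n using Nat.strong_induction_on with
  | _ n ih =>
    intro hn
    match n, hn with
    | 1, _ =>
      constructor
      · simpa [zpow_neg, zpow_one] using h1
      · simpa using h1'
    | 2, _ =>
      constructor
      · simpa using h2'
      · simpa using h2
    | 3, _ =>
      constructor
      · simpa using h3
      · show x 3 ≤ γ ^ ((3:ℤ) - 1)
        norm_num
        simpa using h3'
    | (k+4), _ =>
      have hrec' := hrec (k+4) (by omega)
      simp only [show k+4-1 = k+3 from rfl, show k+4-2 = k+2 from rfl,
        show k+4-3 = k+1 from rfl] at hrec'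
      obtain ⟨l1, u1⟩ := ih (k+3) (by omega) (by omega)
      obtain ⟨l2, u2⟩ := ih (k+2) (by omega) (by omega)
      obtain ⟨l3, u3⟩ := ih (k+1) (by omega) (by omega)
      have c1 : ((k+3:ℕ):ℤ) - 2 = (k:ℤ) + 1 := by push_cast; ring
      have c1' : ((k+3:ℕ):ℤ) - 1 = (k:ℤ) + 2 := by push_cast; ring
      have c2 : ((k+2:ℕ):ℤ) - 2 = (k:ℤ) := by push_cast; ring
      have c2' : ((k+2:ℕ):ℤ) - 1 = (k:ℤ) + 1 := by push_cast; ring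
      have c3 : ((k+1:ℕ):ℤ) - 2 = (k:ℤ) - 1 := by push_cast; ring
      have c3' : ((k+1:ℕ):ℤ) - 1 = (k:ℤ) := by push_cast; ring
      simp only [c1, c1'] at l1 u1
      simp only [c2, c2'] at l2 u2
      simp only [c3, c3'] at l3 u3
      have z1 : γ ^ (1:ℤ) = γ := zpow_one γ
      have z2 : γ ^ (2:ℤ) = γ ^ (2:ℕ) := by
        rw [show (2:ℤ) = ((2:ℕ):ℤ) by norm_num, zpow_natCast]
      have z3 : γ ^ (3:ℤ) = γ ^ (3:ℕ) := by
        rw [show (3:ℤ) = ((3:ℕ):ℤ) by norm_num, zpow_natCast]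
      have e1 := zpow_add₀ hne ((k:ℤ)-1) 2
      rw [show ((k:ℤ)-1)+2 = (k:ℤ)+1 by ring, z2] at e1
      have e2 := zpow_add₀ hne ((k:ℤ)-1) 1
      rw [show ((k:ℤ)-1)+1 = (k:ℤ) by ring, z1] at e2
      have e3 := zpow_add₀ hne ((k:ℤ)-1) 3
      rw [show ((k:ℤ)-1)+3 = (k:ℤ)+2 by ring, z3] at e3
      have e4 := zpow_add₀ hne ((k:ℤ)) 3
      rw [z3] at e4
      have e1' := zpow_add₀ hne ((k:ℤ)) 2
      rw [z2] at e1'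
      have e2' := zpow_add₀ hne ((k:ℤ)) 1
      rw [z1] at e2'
      have key : γ ^ ((k:ℤ) + 2) = a * γ ^ ((k:ℤ)+1) + b * γ ^ ((k:ℤ)) + c * γ ^ ((k:ℤ)-1) := by
        rw [e1, e2, e3, hroot]; ring
      have key' : γ ^ ((k:ℤ) + 3) = a * γ ^ ((k:ℤ)+2) + b * γ ^ ((k:ℤ)+1) + c * γ ^ ((k:ℤ)) := by
        rw [e1', e2', e4, hroot]; ring
      have cg : ((k+4:ℕ):ℤ) - 2 = (k:ℤ) + 2 := by push_cast; ring
      have cg' : ((k+4:ℕ):ℤ) - 1 = (k:ℤ) + 3 := by push_cast; ring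
      rw [cg, cg', hrec', key, key']
      constructor
      · gcongr
      · gcongr
end

section
/- Let (x_n) be the modified Tripell sequence defined by x_0 = 0, x_1 = 1, x_2 = 2 and x_n = 2x_{n-1} + 2x_{n-2} + x_{n-3} for n ≥ 3. Then for all n ≥ 1: ν_2(x_n) = 0 if n ≡ 1 or 4 (mod 6); ν_2(x_n) = 1 if n ≡ 2 or 3 (mod 6); ν_2(x_n) = 2 + ν_2(n) if n ≡ 0 (mod 6); and ν_2(x_n) = 3 + ν_2(n+1) if n ≡ 5 (mod 6). -/
def modTripell : ℕ → ℤ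
  | 0 => 0
  | 1 => 1
  | 2 => 2
  | n + 3 => 2 * modTripell (n + 2) + 2 * modTripell (n + 1) + modTripell n

namespace MT

variable {R : Type*} [Ring R]

lemma key_pow (z : ℤ) (b : R) : ∀ q : ℕ, ∃ c : R,
    (1 + z • b)^q = 1 + ((q : ℤ) * z) • b + (z*z) • c
  | 0 => ⟨0, by simp⟩
  | (q+1) => by
    obtain ⟨c, hc⟩ := key_pow z b q
    refine ⟨(q:ℤ) • (b*b) + c + z • (c*b), ?_⟩
    rw [pow_succ, hc]
    push_cast
    simp only [add_mul, mul_add, one_mul, mul_one, smul_mul_assoc, mul_smul_comm,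
      smul_smul, smul_add]
    module

lemma sq_step (z : ℤ) (b : R) :
    (1 + (2*z) • b)^2 = 1 + (2*(2*z)) • (b + z • (b*b)) := by
  rw [pow_two]
  simp only [add_mul, mul_add, one_mul, mul_one, smul_mul_assoc, mul_smul_comm,
    smul_smul, smul_add]
  module

lemma pow_two_pow (b : R) : ∀ k : ℕ, ∃ e : R,
    (1 + (8:ℤ) • b)^(2^k) = 1 + ((2:ℤ)^(k+3)) • (b + (4:ℤ) • e)
  | 0 => ⟨0, by norm_num⟩
  | (k+1) => by
    obtain ⟨e, he⟩ := pow_two_pow b k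
    set b' : R := b + (4:ℤ) • e with hb'
    refine ⟨e + (2:ℤ)^k • (b'*b'), ?_⟩
    have h1 : (2:ℕ)^(k+1) = 2^k * 2 := by ring
    have h2 : ((2:ℤ)^(k+3)) = 2 * 2^(k+2) := by ring
    have h3 : ((2:ℤ)^(k+1+3)) = 2 * (2 * 2^(k+2)) := by ring
    rw [h1, pow_mul, he, h2, sq_step, ← h3, hb']
    congr 1
    have h4 : (2:ℤ)^(k+2) = 4 * 2^k := by ring
    rw [h4]
    simp only [smul_add, smul_smul]
    module

lemma main_pow (b : R) (k q : ℕ) : ∃ e : R,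
    (1 + (8:ℤ) • b)^(2^k * q) = 1 + ((2:ℤ)^(k+3)) • ((q:ℤ) • b + (4:ℤ) • e) := by
  obtain ⟨e1, he1⟩ := pow_two_pow b k
  obtain ⟨c, hc⟩ := key_pow ((2:ℤ)^(k+3)) (b + (4:ℤ) • e1) q
  refine ⟨(q:ℤ) • e1 + (2:ℤ)^(k+1) • c, ?_⟩
  rw [pow_mul, he1, hc]
  have h1 : ((q:ℤ) * 2^(k+3)) = 2^(k+3) * q := by ring
  have h2 : ((2:ℤ)^(k+3)) * 2^(k+3) = 2^(k+3) * (4 * 2^(k+1)) := by ring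
  rw [h1, h2, ← smul_smul ((2:ℤ)^(k+3)) (q:ℤ), ← smul_smul ((2:ℤ)^(k+3)) (4 * 2^(k+1)), add_assoc, ← smul_add]
  congr 1
  simp only [smul_add, smul_smul]
  module

def M : Matrix (Fin 3) (Fin 3) ℤ := !![2,2,1;1,0,0;0,1,0]
def B : Matrix (Fin 3) (Fin 3) ℤ := !![48,40,17;17,14,6;6,5,2]

lemma hM6 : M^6 = 1 + (8:ℤ) • B := by
  show M^6 = _
  norm_num [M, B, pow_succ, Matrix.mul_fin_three, Matrix.one_fin_three,
    Matrix.smul_of, Matrix.smul_cons, Matrix.smul_empty]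
  decide

def vv (n : ℕ) : Fin 3 → ℤ := ![modTripell (n+2), modTripell (n+1), modTripell n]

lemma hstep (n : ℕ) : M.mulVec (vv n) = vv (n+1) := by
  funext i
  fin_cases i <;>
    simp [M, vv, Matrix.mulVec, dotProduct, Fin.sum_univ_succ, modTripell] <;>
    ring

lemma hpow (n : ℕ) : (M^n).mulVec (vv 0) = vv n := by
  induction n with
  | zero => simp
  | succ n ih => rw [pow_succ', ← Matrix.mulVec_mulVec, ih, hstep]

lemma hMw : M.mulVec ![1,0,0] = vv 0 := by
  funext i
  fin_cases i <;>
    simp [M, vv, Matrix.mulVec, dotProduct, Fin.sum_univ_succ, modTripell]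

lemma hpoww (n : ℕ) : (M^(n+1)).mulVec ![1,0,0] = vv n := by
  rw [pow_succ, ← Matrix.mulVec_mulVec, hMw, hpow]

lemma vv_two (n : ℕ) : vv n 2 = modTripell n := rfl

lemma Bv0 : B.mulVec (vv 0) 2 = 17 := by
  simp [B, vv, Matrix.mulVec, dotProduct, Fin.sum_univ_succ, modTripell]

lemma Bw : B.mulVec ![1,0,0] 2 = 6 := by
  simp [B, Matrix.mulVec, dotProduct, Fin.sum_univ_succ]

/-- extract component 2 of (1 + z•D).mulVec v -/
lemma comp2 (z : ℤ) (D : Matrix (Fin 3) (Fin 3) ℤ) (v : Fin 3 → ℤ) :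
    ((1 + z • D).mulVec v) 2 = v 2 + z * (D.mulVec v 2) := by
  rw [Matrix.add_mulVec, Matrix.one_mulVec, Matrix.smul_mulVec]
  simp [Pi.smul_apply, smul_eq_mul]

lemma comp2' (q : ℕ) (e : Matrix (Fin 3) (Fin 3) ℤ) (v : Fin 3 → ℤ) :
    (((q:ℤ) • B + (4:ℤ) • e).mulVec v) 2 = (q:ℤ) * (B.mulVec v 2) + 4 * (e.mulVec v 2) := by
  rw [Matrix.add_mulVec, Matrix.smul_mulVec, Matrix.smul_mulVec]
  simp [Pi.smul_apply, smul_eq_mul]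

lemma padic_of (k : ℕ) (u : ℤ) (hu : ¬((2:ℤ) ∣ u)) : padicValInt 2 ((2:ℤ)^k * u) = k := by
  haveI : Fact (Nat.Prime 2) := ⟨Nat.prime_two⟩
  have hu0 : u ≠ 0 := by rintro rfl; exact hu (dvd_zero _)
  rw [padicValInt.mul (by positivity) hu0, padicValInt.eq_zero_of_not_dvd hu]
  have : ((2:ℤ)^k) = ((2^k : ℕ) : ℤ) := by push_cast; ring
  rw [this, padicValInt.of_nat, padicValNat.prime_pow, add_zero]

lemma decomp_m (m : ℕ) (hm : m ≠ 0) :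
    ∃ q : ℕ, ¬(2 ∣ q) ∧ 2 ^ (padicValNat 2 m) * q = m := by
  refine ⟨m / 2 ^ (m.factorization 2), ?_, ?_⟩
  · exact Nat.not_dvd_ordCompl Nat.prime_two hm
  · rw [← Nat.factorization_def m Nat.prime_two]
    exact Nat.ordProj_mul_ordCompl_eq_self m 2

lemma x6pow (k q : ℕ) (hq : ¬ (2 ∣ q)) :
    ∃ u : ℤ, ¬((2:ℤ) ∣ u) ∧ modTripell (6*(2^k*q)) = 2^(k+3) * u := by
  obtain ⟨e, he⟩ := main_pow B k q
  have hpw : (M^(6*(2^k*q))).mulVec (vv 0) = vv (6*(2^k*q)) := hpow _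
  rw [pow_mul, hM6, he] at hpw
  have hvv0 : vv 0 2 = 0 := by simp [vv, modTripell]
  refine ⟨(q:ℤ) * 17 + 4 * (e.mulVec (vv 0) 2), ?_, ?_⟩
  · have h2q : ¬ ((2:ℤ) ∣ (q:ℤ)) := by
      intro h; exact hq (by exact_mod_cast h)
    omega
  · rw [← vv_two, ← hpw, comp2, comp2', Bv0, hvv0, zero_add]

lemma x6m (m : ℕ) (hm : m ≠ 0) :
    ∃ u : ℤ, ¬((2:ℤ) ∣ u) ∧ modTripell (6*m) = 2^(padicValNat 2 m + 3) * u := by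
  obtain ⟨q, hq, hqm⟩ := decomp_m m hm
  obtain ⟨u, hu, h⟩ := x6pow (padicValNat 2 m) q hq
  rw [hqm] at h
  exact ⟨u, hu, h⟩

lemma x5pow (m k q : ℕ) (hq : ¬(2 ∣ q)) (hm : m + 1 = 2^k*q) :
    ∃ u : ℤ, ¬((2:ℤ) ∣ u) ∧ modTripell (6*m+5) = 2^(k+4) * u := by
  obtain ⟨e, he⟩ := main_pow B k q
  have hpw := hpoww (6*m+5)
  have h6 : 6*m+5+1 = 6*(2^k*q) := by omega
  rw [h6, pow_mul, hM6, he] at hpw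
  refine ⟨(q:ℤ)*3 + 2*(e.mulVec ![1,0,0] 2), ?_, ?_⟩
  · have h2q : ¬ ((2:ℤ) ∣ (q:ℤ)) := by
      intro h; exact hq (by exact_mod_cast h)
    omega
  · rw [← vv_two, ← hpw, comp2, comp2', Bw]
    show (0:ℤ) + _ = _
    ring

lemma xmod8 (j r : ℕ) : ∃ t : ℤ, modTripell (6*j + r) = modTripell r + 8 * t := by
  obtain ⟨c, hc⟩ := key_pow (8:ℤ) B j
  have hpw : (M^(6*j)).mulVec (vv r) = vv (6*j+r) := by
    rw [← hpow r, Matrix.mulVec_mulVec, ← pow_add, hpow]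
  have hre : ((j:ℤ)*8) • B + ((8:ℤ)*8) • c = (8:ℤ) • ((j:ℤ) • B + (8:ℤ) • c) := by
    simp only [smul_add, smul_smul]; module
  rw [pow_mul, hM6, hc, add_assoc, hre] at hpw
  refine ⟨((j:ℤ) • B + (8:ℤ) • c).mulVec (vv r) 2, ?_⟩
  rw [← vv_two (6*j+r), ← hpw, comp2, vv_two]

lemma val6 (m : ℕ) (hm : m ≠ 0) : padicValNat 2 (6*m) = 1 + padicValNat 2 m := by
  haveI : Fact (Nat.Prime 2) := ⟨Nat.prime_two⟩
  rw [show 6*m = 2*(3*m) by ring,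
    padicValNat.mul (by norm_num) (by positivity),
    padicValNat.mul (by norm_num) hm,
    padicValNat.self one_lt_two,
    padicValNat.eq_zero_of_not_dvd (by norm_num)]
  omega

lemma mt1 : modTripell 1 = 1 := rfl
lemma mt2 : modTripell 2 = 2 := rfl
lemma mt3 : modTripell 3 = 6 := rfl
lemma mt4 : modTripell 4 = 17 := rfl

end MT

theorem stmt_2 (n : ℕ) (hn : 1 ≤ n) :
    (n % 6 = 1 ∨ n % 6 = 4 → padicValInt 2 (modTripell n) = 0) ∧
    (n % 6 = 2 ∨ n % 6 = 3 → padicValInt 2 (modTripell n) = 1) ∧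
    (n % 6 = 0 → padicValInt 2 (modTripell n) = 2 + padicValNat 2 n) ∧
    (n % 6 = 5 → padicValInt 2 (modTripell n) = 3 + padicValNat 2 (n + 1)) := by
  have hdm := Nat.div_add_mod n 6
  set j := n / 6 with hj
  refine ⟨?_, ?_, ?_, ?_⟩
  · rintro (h1 | h4)
    · obtain ⟨t, ht⟩ := MT.xmod8 j 1
      have hn1 : n = 6*j + 1 := by omega
      rw [hn1, ht, MT.mt1]
      exact padicValInt.eq_zero_of_not_dvd (by omega)
    · obtain ⟨t, ht⟩ := MT.xmod8 j 4
      have hn4 : n = 6*j + 4 := by omega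
      rw [hn4, ht, MT.mt4]
      exact padicValInt.eq_zero_of_not_dvd (by omega)
  · rintro (h2 | h3)
    · obtain ⟨t, ht⟩ := MT.xmod8 j 2
      have hn2 : n = 6*j + 2 := by omega
      have hx : modTripell n = 2^1 * (1 + 4*t) := by rw [hn2, ht, MT.mt2]; ring
      rw [hx, MT.padic_of 1 _ (by omega)]
    · obtain ⟨t, ht⟩ := MT.xmod8 j 3
      have hn3 : n = 6*j + 3 := by omega
      have hx : modTripell n = 2^1 * (3 + 4*t) := by rw [hn3, ht, MT.mt3]; ring
      rw [hx, MT.padic_of 1 _ (by omega)]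
  · intro h0
    have hj0 : j ≠ 0 := by omega
    have hn0 : n = 6*j := by omega
    obtain ⟨u, hu, hx⟩ := MT.x6m j hj0
    rw [hn0, hx, MT.padic_of _ _ hu, MT.val6 j hj0]
    omega
  · intro h5
    have hn5 : n = 6*j + 5 := by omega
    obtain ⟨q, hq, hqm⟩ := MT.decomp_m (j+1) (by omega)
    obtain ⟨u, hu, hx⟩ := MT.x5pow j (padicValNat 2 (j+1)) q hq hqm.symm
    rw [hn5, hx, MT.padic_of _ _ hu]
    have h61 : 6*j + 5 + 1 = 6*(j+1) := by omega
    rw [h61, MT.val6 (j+1) (by omega)]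
    omega
end

section
/- Let (x_n) be the modified Tripell sequence defined by x_0 = 0, x_1 = 1, x_2 = 2 and x_n = 2x_{n-1} + 2x_{n-2} + x_{n-3}. The only solutions of x_n = m! in positive integers n, m are (n, m) ∈ {(1,1), (2,2), (3,3)}. -/
/-!
The 2-adic valuation of `x n` grows only logarithmically in `n`. For `N = 6 * 2 ^ t` the terms
`x N` and `x (N - 1)` have valuations exactly `t + 3` and `t + 4`, and the shift formula
`x (n + N) = x (N - 2) * x n + x N * x (n + 1) + x (N - 1) * (x (n + 2) - 2 * x (n + 1))`
both propagates this along the multiples of `N` and passes from `N` to `2 * N`. Hence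
`2 ^ (t + 4) ∣ x n` forces `12 * 2 ^ t ∣ n` or `6 * 2 ^ t ∣ n + 1`, so `n ≥ 6 * 2 ^ t - 1`.
As `2 ^ (m / 2) ∣ m !` and `x n ≥ 2 ^ (n - 1)`, the equation `x n = m !` then forces `m < 22`,
and the remaining cases are a finite computation.
-/

open Nat

theorem odd_mul_modEq_self {u a : ℤ} {s : ℕ} (hu : Odd u) (ha : 2 ^ s ∣ a) :
    u * a ≡ a [ZMOD 2 ^ (s + 1)] := by
  obtain ⟨k, rfl⟩ := hu
  obtain ⟨c, rfl⟩ := ha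
  exact Int.modEq_iff_dvd.2 ⟨-(k * c), by ring⟩

theorem mul_modEq_two_pow_succ {a b : ℤ} {s : ℕ} (ha : a ≡ 2 ^ s [ZMOD 2 ^ (s + 1)])
    (hb : b ≡ 2 [ZMOD 4]) : a * b ≡ 2 ^ (s + 1) [ZMOD 2 ^ (s + 2)] := by
  obtain ⟨c, hc⟩ := Int.modEq_iff_add_fac.1 ha.symm
  obtain ⟨d, hd⟩ := Int.modEq_iff_add_fac.1 hb.symm
  exact Int.modEq_iff_dvd.2 ⟨-(c + d + 2 * c * d), by rw [hc, hd]; ring⟩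

theorem two_dvd_of_modEq_mul_two_pow {a c : ℤ} {s : ℕ} (ha : 2 ^ (s + 1) ∣ a)
    (h : a ≡ c * 2 ^ s [ZMOD 2 ^ (s + 1)]) : 2 ∣ c := by
  rw [h.dvd_iff, pow_succ, mul_comm c] at ha
  exact (mul_dvd_mul_iff_left (pow_ne_zero s two_ne_zero)).1 ha

theorem Int.ModEq.dvd_of_dvd {a b m n : ℤ} (h : a ≡ b [ZMOD n]) (hmn : m ∣ n) (hb : m ∣ b) :
    m ∣ a :=
  (h.of_dvd hmn).dvd_iff.2 hb

theorem odd_of_modEq_eight {a : ℤ} (h : a ≡ 1 [ZMOD 8]) : Odd a :=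
  Int.odd_iff.2 (h.of_dvd (by norm_num : (2 : ℤ) ∣ 8))

theorem two_pow_half_dvd_factorial (m : ℕ) : 2 ^ (m / 2) ∣ m ! := by
  rw [Nat.prime_two.pow_dvd_factorial_iff (lt_add_of_pos_right _ two_pos)]
  have h1 : 1 ∈ Finset.Ico 1 (log 2 m + 2) := by simp
  simpa using Finset.single_le_sum (f := fun i => m / 2 ^ i) (fun _ _ => zero_le _) h1

namespace modTripell

local notation "x" => modTripell

theorem add_three (n : ℕ) : x (n + 3) = 2 * x (n + 2) + 2 * x (n + 1) + x n := rfl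

theorem add (k n : ℕ) : x (n + (k + 2)) =
    x k * x n + x (k + 2) * x (n + 1) + x (k + 1) * (x (n + 2) - 2 * x (n + 1)) := by
  induction k generalizing n with
  | zero => simp [modTripell]
  | succ k ih =>
    rw [show n + (k + 1 + 2) = n + 1 + (k + 2) by omega, ih (n + 1), add_three n, add_three k]
    ring

theorem nonneg (n : ℕ) : 0 ≤ x n := by
  induction n using modTripell.induct with
  | case4 n h2 h1 h0 => rw [add_three]; positivity
  | _ => decide

theorem two_mul_le (n : ℕ) : 2 * x (n + 1) ≤ x (n + 2) := by
  cases n with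
  | zero => decide
  | succ n => rw [add_three]; linarith [nonneg n, nonneg (n + 1)]

theorem two_pow_le (n : ℕ) : 2 ^ n ≤ x (n + 1) := by
  induction n with
  | zero => decide
  | succ n ih => rw [pow_succ]; linarith [two_mul_le n]

theorem le_of_lt_two_pow {n k : ℕ} (h : x n < 2 ^ k) : n ≤ k := by
  cases n with
  | zero => exact zero_le k
  | succ n => exact (pow_lt_pow_iff_right₀ one_lt_two).1 ((two_pow_le n).trans_lt h)

theorem modEq_of_modEq {d : ℤ} {k a b : ℕ} (h₀ : x k ≡ 0 [ZMOD d])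
    (h₁ : x (k + 1) ≡ 1 [ZMOD d]) (h₂ : x (k + 2) ≡ 2 [ZMOD d]) (hab : a ≡ b [MOD k]) :
    x a ≡ x b [ZMOD d] := by
  have hshift (n : ℕ) : x (n + k) ≡ x n [ZMOD d] := by
    induction n using modTripell.induct with
    | case1 => rw [zero_add]; exact h₀
    | case2 => rw [add_comm]; exact h₁
    | case3 => rw [add_comm]; exact h₂
    | case4 n h2 h1 h0 =>
      rw [show n + 3 + k = n + k + 3 by omega, add_three, add_three,
        show n + k + 2 = n + 2 + k by omega, show n + k + 1 = n + 1 + k by omega]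
      exact ((h2.mul_left 2).add (h1.mul_left 2)).add h0
  have hper : Function.Periodic (fun n => x n % d) k := hshift
  calc x a % d = x (a % k) % d := (hper.map_mod_nat a).symm
    _ = x (b % k) % d := by rw [hab]
    _ = x b % d := hper.map_mod_nat b

theorem modEq_eight {a b : ℕ} (h : a ≡ b [MOD 6]) : x a ≡ x b [ZMOD 8] :=
  modEq_of_modEq (by decide) (by decide) (by decide) h

theorem modEq_sixteen {a b : ℕ} (h : a ≡ b [MOD 12]) : x a ≡ x b [ZMOD 16] :=
  modEq_of_modEq (by decide) (by decide) (by decide) h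

theorem modEq_eight_add {M : ℕ} (hM : 6 ∣ M) (r : ℕ) : x (M + r) ≡ x r [ZMOD 8] :=
  modEq_eight (by simpa using (Nat.modEq_zero_iff_dvd.2 hM).add_right r)

/-- `x N` and `x (N - 1)` have 2-adic valuations exactly `s` and `s + 1`. -/
structure ExactTwoAdic (s N : ℕ) : Prop where
  six_dvd : 6 ∣ N
  pos : 0 < N
  modEq : x N ≡ 2 ^ s [ZMOD 2 ^ (s + 1)]
  modEq_sub_one : x (N - 1) ≡ 2 ^ (s + 1) [ZMOD 2 ^ (s + 2)]

namespace ExactTwoAdic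

variable {s N : ℕ}

theorem pow_dvd (h : ExactTwoAdic s N) : 2 ^ s ∣ x N :=
  h.modEq.dvd_of_dvd (pow_dvd_pow 2 s.le_succ) dvd_rfl

theorem pow_dvd_sub_one (h : ExactTwoAdic s N) : 2 ^ (s + 1) ∣ x (N - 1) :=
  h.modEq_sub_one.dvd_of_dvd (pow_dvd_pow 2 (s + 1).le_succ) dvd_rfl

theorem modEq_eight_sub_two (h : ExactTwoAdic s N) : x (N - 2) ≡ 1 [ZMOD 8] := by
  have h6 := h.six_dvd
  have h0 := h.pos
  exact (modEq_eight (b := 4) (by unfold Nat.ModEq; omega)).trans (by decide)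

theorem add_eq (h : ExactTwoAdic s N) (n : ℕ) : x (n + N) =
    x (N - 2) * x n + x N * x (n + 1) + x (N - 1) * (x (n + 2) - 2 * x (n + 1)) := by
  have h6 := h.six_dvd
  have h0 := h.pos
  obtain ⟨k, rfl⟩ : ∃ k, N = k + 2 := ⟨N - 2, by omega⟩
  simpa using add k n

theorem modEq_mul (h : ExactTwoAdic s N) (j : ℕ) :
    x (j * N) ≡ j * 2 ^ s [ZMOD 2 ^ (s + 1)] := by
  induction j with
  | zero => simp [modTripell]
  | succ j ih =>
    rw [add_mul, one_mul, h.add_eq]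
    have hodd : Odd (x (j * N + 1)) :=
      odd_of_modEq_eight (modEq_eight_add (h.six_dvd.mul_left j) 1)
    have t₁ : x (N - 2) * x (j * N) ≡ x (j * N) [ZMOD 2 ^ (s + 1)] :=
      odd_mul_modEq_self (odd_of_modEq_eight h.modEq_eight_sub_two)
        (ih.dvd_of_dvd (pow_dvd_pow 2 s.le_succ) (dvd_mul_left _ _))
    have t₂ : x N * x (j * N + 1) ≡ x N [ZMOD 2 ^ (s + 1)] := by
      rw [mul_comm]
      exact odd_mul_modEq_self hodd h.pow_dvd
    have t₃ : x (N - 1) * (x (j * N + 2) - 2 * x (j * N + 1)) ≡ 0 [ZMOD 2 ^ (s + 1)] :=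
      Int.modEq_zero_iff_dvd.2 (dvd_mul_of_dvd_left h.pow_dvd_sub_one _)
    calc _ ≡ x (j * N) + x N + 0 [ZMOD 2 ^ (s + 1)] := (t₁.add t₂).add t₃
      _ ≡ j * 2 ^ s + 2 ^ s + 0 [ZMOD 2 ^ (s + 1)] := (ih.add h.modEq).add_right 0
      _ = ((j + 1 : ℕ) : ℤ) * 2 ^ s := by push_cast; ring

theorem modEq_mul_sub_one (h : ExactTwoAdic s N) (j : ℕ) :
    x ((j + 1) * N - 1) ≡ (j + 1 : ℕ) * 2 ^ (s + 1) [ZMOD 2 ^ (s + 2)] := by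
  induction j with
  | zero => simpa using h.modEq_sub_one
  | succ j ih =>
    set M := (j + 1) * N with hM
    have hM0 : 0 < M := Nat.mul_pos j.succ_pos h.pos
    have hM6 : 6 ∣ M := h.six_dvd.mul_left _
    rw [show (j + 1 + 1) * N - 1 = M - 1 + N by rw [add_mul, one_mul, ← hM]; omega, h.add_eq,
      show M - 1 + 1 = M by omega, show M - 1 + 2 = M + 1 by omega]
    have hodd : Odd (x (M + 1) - 2 * x M) :=
      (odd_of_modEq_eight (modEq_eight_add hM6 1)).sub_even (even_two_mul _)
    have t₁ : x (N - 2) * x (M - 1) ≡ x (M - 1) [ZMOD 2 ^ (s + 2)] :=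
      odd_mul_modEq_self (odd_of_modEq_eight h.modEq_eight_sub_two)
        (ih.dvd_of_dvd (pow_dvd_pow 2 (s + 1).le_succ) (dvd_mul_left _ _))
    have t₂ : x N * x M ≡ 0 [ZMOD 2 ^ (s + 2)] :=
      Int.modEq_zero_iff_dvd.2 (dvd_trans ⟨2, by ring⟩
        (mul_dvd_mul h.pow_dvd (Int.modEq_zero_iff_dvd.1 (modEq_eight_add hM6 0))))
    have t₃ : x (N - 1) * (x (M + 1) - 2 * x M) ≡ x (N - 1) [ZMOD 2 ^ (s + 2)] := by
      rw [mul_comm]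
      exact odd_mul_modEq_self hodd h.pow_dvd_sub_one
    calc _ ≡ x (M - 1) + 0 + x (N - 1) [ZMOD 2 ^ (s + 2)] := (t₁.add t₂).add t₃
      _ ≡ (j + 1 : ℕ) * 2 ^ (s + 1) + 0 + 2 ^ (s + 1) [ZMOD 2 ^ (s + 2)] :=
        (ih.add_right 0).add h.modEq_sub_one
      _ = ((j + 1 + 1 : ℕ) : ℤ) * 2 ^ (s + 1) := by push_cast; ring

theorem double (h : ExactTwoAdic s N) : ExactTwoAdic (s + 1) (2 * N) := by
  have h0 := h.pos
  have e₀ : 8 ∣ x N := Int.modEq_zero_iff_dvd.1 (modEq_eight_add h.six_dvd 0)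
  have e₁ : x (N + 1) ≡ 1 [ZMOD 8] := modEq_eight_add h.six_dvd 1
  have e₂ : x (N + 2) ≡ 2 [ZMOD 8] := modEq_eight_add h.six_dvd 2
  have e₄ := h.modEq_eight_sub_two
  refine ⟨dvd_mul_of_dvd_right h.six_dvd 2, by omega, ?_, ?_⟩
  · rw [two_mul, h.add_eq]
    have hsum : x (N - 2) + x (N + 1) ≡ 2 [ZMOD 4] := (e₄.add e₁).of_dvd (by norm_num)
    have heven : 2 ∣ x (N + 2) - 2 * x (N + 1) :=
      dvd_sub (e₂.dvd_of_dvd (by norm_num) (by norm_num)) (dvd_mul_right 2 _)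
    have hrest : x (N - 1) * (x (N + 2) - 2 * x (N + 1)) ≡ 0 [ZMOD 2 ^ (s + 2)] :=
      Int.modEq_zero_iff_dvd.2 (dvd_trans ⟨1, by ring⟩ (mul_dvd_mul h.pow_dvd_sub_one heven))
    calc _ = x N * (x (N - 2) + x (N + 1)) + x (N - 1) * (x (N + 2) - 2 * x (N + 1)) := by ring
      _ ≡ 2 ^ (s + 1) + 0 [ZMOD 2 ^ (s + 2)] := (mul_modEq_two_pow_succ h.modEq hsum).add hrest
      _ = 2 ^ (s + 1) := add_zero _
  · rw [show 2 * N - 1 = N - 1 + N by omega, h.add_eq, show N - 1 + 1 = N by omega,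
      show N - 1 + 2 = N + 1 by omega]
    have hsum : x (N - 2) + x (N + 1) - 2 * x N ≡ 2 [ZMOD 4] :=
      ((e₄.add e₁).sub (Int.modEq_zero_iff_dvd.2 (dvd_mul_of_dvd_right e₀ 2))).of_dvd
        (by norm_num)
    have hsq : x N * x N ≡ 0 [ZMOD 2 ^ (s + 3)] :=
      Int.modEq_zero_iff_dvd.2 (dvd_trans ⟨1, by ring⟩ (mul_dvd_mul h.pow_dvd e₀))
    calc _ = x (N - 1) * (x (N - 2) + x (N + 1) - 2 * x N) + x N * x N := by ring
      _ ≡ 2 ^ (s + 2) + 0 [ZMOD 2 ^ (s + 3)] :=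
        (mul_modEq_two_pow_succ h.modEq_sub_one hsum).add hsq
      _ = 2 ^ (s + 2) := add_zero _

end ExactTwoAdic

theorem exactTwoAdic_six_mul_two_pow (t : ℕ) : ExactTwoAdic (t + 3) (6 * 2 ^ t) := by
  induction t with
  | zero => exact ⟨by norm_num, by norm_num, by decide, by decide⟩
  | succ t ih => exact (by ring : 2 * (6 * 2 ^ t) = 6 * 2 ^ (t + 1)) ▸ ih.double

theorem dvd_or_dvd_of_two_pow_dvd (t n : ℕ) (h : 2 ^ (t + 4) ∣ x n) :
    12 * 2 ^ t ∣ n ∨ 6 * 2 ^ t ∣ n + 1 := by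
  induction t generalizing n with
  | zero =>
    have key : ∀ r < 12, (16 : ℤ) ∣ x r → r = 0 ∨ r = 5 ∨ r = 11 := by decide
    have := key (n % 12) (n.mod_lt (by norm_num))
      ((modEq_sixteen (Nat.mod_modEq n 12)).dvd_of_dvd dvd_rfl h)
    omega
  | succ t ih =>
    rcases ih n ((pow_dvd_pow 2 (by omega)).trans h) with ⟨j, rfl⟩ | ⟨j, hj⟩
    · have hA := (exactTwoAdic_six_mul_two_pow (t + 1)).modEq_mul j
      rw [show j * (6 * 2 ^ (t + 1)) = 12 * 2 ^ t * j by ring] at hA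
      obtain ⟨i, rfl⟩ : 2 ∣ j := by exact_mod_cast two_dvd_of_modEq_mul_two_pow h hA
      exact Or.inl ⟨i, by ring⟩
    · obtain ⟨i, rfl⟩ := Nat.exists_eq_add_one_of_ne_zero (by rintro rfl; omega : j ≠ 0)
      have hB := (exactTwoAdic_six_mul_two_pow t).modEq_mul_sub_one i
      rw [mul_comm, ← hj, Nat.add_sub_cancel] at hB
      obtain ⟨k, hk⟩ : 2 ∣ i + 1 := by exact_mod_cast two_dvd_of_modEq_mul_two_pow h hB
      exact Or.inr ⟨k, by rw [hj, hk]; ring⟩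

theorem six_mul_two_pow_le {t n : ℕ} (hn : n ≠ 0) (h : 2 ^ (t + 4) ∣ x n) :
    6 * 2 ^ t ≤ n + 1 := by
  rcases dvd_or_dvd_of_two_pow_dvd t n h with h | h
  · have := Nat.le_of_dvd (by omega) h
    omega
  · exact Nat.le_of_dvd n.succ_pos h

theorem ne_factorial {n m : ℕ} (hm : 22 ≤ m) : x n ≠ m ! := by
  intro h
  have hn : n ≠ 0 := by
    rintro rfl
    have h0 : ((m ! : ℕ) : ℤ) = 0 := h.symm
    exact factorial_ne_zero m (by exact_mod_cast h0)
  set t := m / 2 - 4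
  have hlow : 6 * 2 ^ t ≤ n + 1 := by
    refine six_mul_two_pow_le hn (h ▸ ?_)
    exact_mod_cast (show m / 2 = t + 4 by omega) ▸ two_pow_half_dvd_factorial m
  have hup : n ≤ m * m := by
    refine le_of_lt_two_pow (h ▸ ?_)
    exact_mod_cast (factorial_le_pow m).trans_lt
      (pow_mul 2 m m ▸ Nat.pow_lt_pow_left m.lt_two_pow_self (by omega))
  have hexp : ∀ t ≥ 7, (2 * t + 9) ^ 2 + 2 < 6 * 2 ^ t := by
    intro t ht
    induction t, ht using Nat.le_induction with
    | base => norm_num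
    | succ t _ ih => rw [pow_succ 2 t]; nlinarith
  have := hexp t (by omega)
  have : m * m ≤ (2 * t + 9) ^ 2 := by rw [sq]; exact Nat.mul_le_mul (by omega) (by omega)
  omega

end modTripell

theorem stmt_3_general (n m : ℕ) (hm : 1 ≤ m) :
    modTripell n = (m.factorial : ℤ) ↔
      (n, m) = (1, 1) ∨ (n, m) = (2, 2) ∨ (n, m) = (3, 3) := by
  constructor
  · intro h
    have hm22 : m < 22 := not_le.1 fun hm22 => modTripell.ne_factorial hm22 h
    have hn67 : n < 67 := Nat.lt_succ_of_le <| modTripell.le_of_lt_two_pow <| h ▸ by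
      exact_mod_cast (factorial_le (by omega : m ≤ 21)).trans_lt (by decide)
    obtain ⟨rfl, hn3⟩ : m = n ∧ n ≤ 3 :=
      (by decide : ∀ n < 67, ∀ m < 22, 1 ≤ m → modTripell n = m ! → m = n ∧ n ≤ 3)
        n hn67 m hm22 hm h
    interval_cases m <;> simp
  · rintro (h | h | h) <;> obtain ⟨rfl, rfl⟩ := Prod.mk.inj h <;> decide

theorem stmt_3 (n m : ℕ) (hn : 1 ≤ n) (hm : 1 ≤ m) :
    modTripell n = (m.factorial : ℤ) ↔
      (n, m) = (1, 1) ∨ (n, m) = (2, 2) ∨ (n, m) = (3, 3) :=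
  stmt_3_general n m hm
end

section
/- Let (x_n) be the modified Tripell sequence (x_0=0, x_1=1, x_2=2, x_n = 2x_{n-1}+2x_{n-2}+x_{n-3}). For all n ≥ 1 with n ≡ 0 (mod 6), ν_2(x_n) ≥ 3, and for all n ≥ 1 with n ≡ 5 (mod 6), ν_2(x_n) ≥ 4. -/
lemma modTripell_pos_aux : ∀ n, 0 ≤ modTripell n ∧ 0 < modTripell (n+1) ∧ 0 < modTripell (n+2)
  | 0 => by norm_num [modTripell]
  | n+1 => by
    obtain ⟨h0, h1, h2⟩ := modTripell_pos_aux n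
    refine ⟨h1.le, h2, ?_⟩
    show 0 < 2 * modTripell (n + 2) + 2 * modTripell (n + 1) + modTripell n
    linarith

lemma modTripell_pos (n : ℕ) (hn : 1 ≤ n) : 0 < modTripell n := by
  obtain ⟨m, rfl⟩ := Nat.exists_eq_add_of_le hn
  rw [add_comm]
  exact (modTripell_pos_aux m).2.1

lemma modTripell_per_aux : ∀ n, ((16:ℤ) ∣ modTripell (n+12) - modTripell n) ∧
    ((16:ℤ) ∣ modTripell (n+13) - modTripell (n+1)) ∧
    ((16:ℤ) ∣ modTripell (n+14) - modTripell (n+2))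
  | 0 => by norm_num [modTripell]
  | n+1 => by
    obtain ⟨h0, h1, h2⟩ := modTripell_per_aux n
    refine ⟨h1, h2, ?_⟩
    have e1 : modTripell (n+15) = 2 * modTripell (n + 14) + 2 * modTripell (n + 13) + modTripell (n+12) := rfl
    have e2 : modTripell (n+3) = 2 * modTripell (n + 2) + 2 * modTripell (n + 1) + modTripell n := rfl
    show (16:ℤ) ∣ modTripell (n+15) - modTripell (n+3)
    rw [e1, e2]
    obtain ⟨a, ha⟩ := h0; obtain ⟨b, hb⟩ := h1; obtain ⟨c, hc⟩ := h2
    refine ⟨2*c + 2*b + a, ?_⟩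
    linarith

lemma modTripell_dvd : ∀ n, (n % 6 = 0 → (8:ℤ) ∣ modTripell n) ∧
    (n % 6 = 5 → (16:ℤ) ∣ modTripell n) := by
  intro n
  induction n using Nat.strong_induction_on with
  | _ n ih =>
    by_cases h : n < 12
    · interval_cases n <;> norm_num [modTripell]
    · push_neg at h
      obtain ⟨m, rfl⟩ := Nat.exists_eq_add_of_le h
      obtain ⟨ih0, ih5⟩ := ih m (by omega)
      have hper := (modTripell_per_aux m).1
      have h12 : 12 + m = m + 12 := by omega
      rw [h12]
      constructor
      · intro hm
        have h8 : (8:ℤ) ∣ modTripell m := ih0 (by omega)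
        have h8' : (8:ℤ) ∣ modTripell (m+12) - modTripell m := dvd_trans (by norm_num) hper
        omega
      · intro hm
        have h16 : (16:ℤ) ∣ modTripell m := ih5 (by omega)
        omega

theorem stmt_12 (n : ℕ) (hn : 1 ≤ n) :
    (n % 6 = 0 → 3 ≤ padicValInt 2 (modTripell n)) ∧
    (n % 6 = 5 → 4 ≤ padicValInt 2 (modTripell n)) := by
  have hne : modTripell n ≠ 0 := (modTripell_pos n hn).ne'
  obtain ⟨h0, h5⟩ := modTripell_dvd n
  constructor
  · intro h
    have := h0 h
    have hd : ((2:ℤ)^3) ∣ modTripell n := by norm_num [this]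
    rcases (padicValInt_dvd_iff 3 (modTripell n)).mp hd with h | h
    · exact absurd h hne
    · exact h
  · intro h
    have := h5 h
    have hd : ((2:ℤ)^4) ∣ modTripell n := by norm_num [this]
    rcases (padicValInt_dvd_iff 4 (modTripell n)).mp hd with h | h
    · exact absurd h hne
    · exact h
end

section
/- Let α₁, α₂, α₃ ∈ ℂ be nonzero and let ξ₁, ξ₂, ξ₃ be roots of unity with α₁ξ₁ + α₂ξ₂ + α₃ξ₃ = 0. If the field K = ℚ(α₁, α₂, α₃, ξ₁, ξ₂, ξ₃) contains no primitive cube root of unity and the ratios ξ₂/ξ₁ and ξ₃/ξ₁ lie in K, then under the hypothesis that α₁, α₂, α₃ are the conjugates of a degree-3 algebraic number α with ℚ(α) not Galois over ℚ, one has ξ₁ = ξ₂ = ξ₃ and hence α₁ + α₂ + α₃ = 0. -/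
/-!
Since `ℚ(α)` is not normal, `Gal(ℚ̄/ℚ)` contains `σ` acting on the conjugates as the 3-cycle
`(α₁ α₂ α₃)` and `τ` acting as the transposition `(α₂ α₃)`. Every automorphism acts on the `n`-th
roots of unity as a power map, so `σ` and `τ` commute on the field generated by roots of unity.
Applying `σ` and `τ` to `α₁ + α₂ η₂ + α₃ η₃ = 0`, where `ηᵢ = ξᵢ / ξ₁`, and eliminating `α₁` yields
relations `α₂ x + α₃ y = 0` with `x, y` cyclotomic. These force `x = y = 0`: otherwise `α₂ / α₃` is
cyclotomic, and `σ τ = τ σ` on it gives `α₁² = α₂ α₃` and `α₂² = α₁ α₃`, making `α₁ / α₂` a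
nontrivial cube root of unity in `K`. The resulting multiplicative relations between `η₂` and `η₃`
force `η₂³ = η₃³ = 1`, hence `η₂ = η₃ = 1`.
-/

open IntermediateField Polynomial

theorem IsOfFinOrder.div₀ {G₀ : Type*} [CommGroupWithZero G₀] {x y : G₀}
    (hx : IsOfFinOrder x) (hy : IsOfFinOrder y) : IsOfFinOrder (x / y) := by
  obtain ⟨m, hm, hxm⟩ := isOfFinOrder_iff_pow_eq_one.mp hx
  obtain ⟨n, hn, hyn⟩ := isOfFinOrder_iff_pow_eq_one.mp hy
  refine isOfFinOrder_iff_pow_eq_one.mpr ⟨m * n, by positivity, ?_⟩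
  rw [div_pow, pow_mul, hxm, pow_mul', hyn, one_pow, one_pow, div_one]

theorem pow_three_eq_one_of_zpow_relations {G : Type*} [Group G] {x y : G} {u v : ℤ}
    (hxy : x = y ^ v) (hyx : y = x ^ v) (h₁ : x * y ^ u = 1) (h₂ : x ^ u = y * y ^ u) :
    x ^ 3 = 1 ∧ y ^ 3 = 1 := by
  subst hyx
  have hA : x ^ (v * v) = x ^ (1 : ℤ) := by rw [zpow_mul, ← hxy, zpow_one]
  have hB : x ^ (1 + v * u) = x ^ (0 : ℤ) := by rw [zpow_add, zpow_one, zpow_mul, h₁, zpow_zero]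
  have hC : x ^ u = x ^ (v + v * u) := by rw [zpow_add, zpow_mul, h₂]
  simp only [zpow_eq_zpow_iff_modEq, ← ZMod.intCast_eq_intCast_iff] at hA hB hC
  push_cast at hA hB hC
  -- modulo `orderOf x`: `v² = 1`, `v u = -1` and `u = v (u + 1)` force `v = 2`, hence `3 = 0`
  have h3 : ((3 : ℕ) : ZMod (orderOf x)) = 0 := by
    push_cast
    linear_combination -((v : ZMod (orderOf x)) + 1) * hA
      + ((v : ZMod (orderOf x)) + 2) * (1 - (v : ZMod (orderOf x))) * hB
      - (v : ZMod (orderOf x)) * (v + 2) * hC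
  have hx : x ^ 3 = 1 := orderOf_dvd_iff_pow_eq_one.mp ((ZMod.natCast_eq_zero_iff _ _).mp h3)
  exact ⟨hx, by rw [← zpow_natCast, ← zpow_mul, mul_comm, zpow_mul, zpow_natCast, hx, one_zpow]⟩

section RootsOfUnity

variable {L G : Type*} [Field L] [FunLike G L L]

theorem exists_map_eq_zpow_of_pow_eq_one [MonoidHomClass G L L] (g : G) (n : ℕ) [NeZero n] :
    ∃ k : ℤ, ∀ z : L, z ^ n = 1 → g z = z ^ k := by
  obtain ⟨k, hk⟩ := MonoidHom.map_cyclic (restrictRootsOfUnity g n)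
  refine ⟨k, fun z hz => ?_⟩
  simpa using congrArg (fun t : rootsOfUnity n L => ((t : Lˣ) : L))
    (hk (rootsOfUnity.mkOfPowEq z hz))

theorem map_map_comm_of_isOfFinOrder [MonoidHomClass G L L] (g h : G) {z : L}
    (hz : IsOfFinOrder z) : g (h z) = h (g z) := by
  have : NeZero (orderOf z) := ⟨hz.orderOf_pos.ne'⟩
  have hz₁ := pow_orderOf_eq_one z
  have hmap : ∀ f : G, f z ^ orderOf z = 1 := fun f => by rw [← map_pow, hz₁, map_one]
  obtain ⟨a, ha⟩ := exists_map_eq_zpow_of_pow_eq_one g (orderOf z)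
  obtain ⟨b, hb⟩ := exists_map_eq_zpow_of_pow_eq_one h (orderOf z)
  rw [ha _ (hmap h), hb _ hz₁, hb _ (hmap g), ha _ hz₁, ← zpow_mul, ← zpow_mul, mul_comm]

variable (L) in
def cyclotomicSubfield : Subfield L := Subfield.closure {z | IsOfFinOrder z}

theorem map_map_comm_of_mem_cyclotomicSubfield [RingHomClass G L L] (g h : G) {z : L}
    (hz : z ∈ cyclotomicSubfield L) : g (h z) = h (g z) :=
  RingHom.eqOn_field_closure (f := (g : L →+* L).comp h) (g := (h : L →+* L).comp g)
    (fun _ hx => map_map_comm_of_isOfFinOrder g h hx) hz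

theorem pow_three_eq_of_map_map_div_comm [RingHomClass G L L] {σ τ : G} {a₁ a₂ a₃ : L}
    (h₁ : a₁ ≠ 0) (h₂ : a₂ ≠ 0) (h₃ : a₃ ≠ 0)
    (hσ₁ : σ a₁ = a₂) (hσ₂ : σ a₂ = a₃) (hσ₃ : σ a₃ = a₁)
    (hτ₁ : τ a₁ = a₁) (hτ₂ : τ a₂ = a₃) (hτ₃ : τ a₃ = a₂)
    (hcomm : σ (τ (a₂ / a₃)) = τ (σ (a₂ / a₃))) : a₁ ^ 3 = a₂ ^ 3 := by
  have hc₁ : a₁ / a₃ = a₂ / a₁ := by simpa [map_div₀, hσ₁, hσ₂, hσ₃, hτ₁, hτ₂, hτ₃] using hcomm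
  have hc₂ : a₂ / a₁ = a₃ / a₂ := by simpa [map_div₀, hσ₁, hσ₂, hσ₃] using congrArg σ hc₁
  field_simp at hc₁ hc₂
  linear_combination a₁ * hc₁ - a₂ * hc₂

theorem eq_zero_of_mul_add_mul_eq_zero [RingHomClass G L L] {σ τ : G} {a₁ a₂ a₃ : L}
    (h₁ : a₁ ≠ 0) (h₂ : a₂ ≠ 0) (h₃ : a₃ ≠ 0)
    (hσ₁ : σ a₁ = a₂) (hσ₂ : σ a₂ = a₃) (hσ₃ : σ a₃ = a₁)
    (hτ₁ : τ a₁ = a₁) (hτ₂ : τ a₂ = a₃) (hτ₃ : τ a₃ = a₂) (hcube : a₁ ^ 3 ≠ a₂ ^ 3)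
    {x y : L} (hx : x ∈ cyclotomicSubfield L) (hy : y ∈ cyclotomicSubfield L)
    (hxy : a₂ * x + a₃ * y = 0) : x = 0 ∧ y = 0 := by
  have hx₀ : x = 0 := by
    by_contra hx₀
    have hratio : a₂ / a₃ = -y / x := by
      field_simp
      linear_combination hxy
    refine hcube (pow_three_eq_of_map_map_div_comm h₁ h₂ h₃ hσ₁ hσ₂ hσ₃ hτ₁ hτ₂ hτ₃ ?_)
    exact hratio ▸ map_map_comm_of_mem_cyclotomicSubfield σ τ (div_mem (neg_mem hy) hx)
  subst hx₀
  exact ⟨rfl, by simpa [h₃] using hxy⟩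

end RootsOfUnity

section Roots

variable {F L : Type*} [Field F] [Field L] [Algebra F L] {p : F[X]} {a₁ a₂ a₃ : L}

theorem ne_of_aroots_eq_triple (hsep : p.Separable) (hp : p.aroots L = {a₁, a₂, a₃}) :
    a₁ ≠ a₂ ∧ a₁ ≠ a₃ ∧ a₂ ≠ a₃ := by
  have hnd := nodup_roots (hsep.map (f := algebraMap F L))
  rw [← aroots_def, hp] at hnd
  simp only [Multiset.insert_eq_cons, Multiset.nodup_cons, Multiset.mem_cons,
    Multiset.mem_singleton, Multiset.nodup_singleton, not_or] at hnd
  exact ⟨hnd.1.1, hnd.1.2, hnd.2.1⟩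

theorem algEquiv_apply_eq_of_aroots_eq_triple (hp : p.aroots L = {a₁, a₂, a₃}) (g : L ≃ₐ[F] L)
    {x : L} (hx : x = a₁ ∨ x = a₂ ∨ x = a₃) : g x = a₁ ∨ g x = a₂ ∨ g x = a₃ := by
  have hx' : x ∈ p.aroots L := by simpa [hp] using hx
  have hgx : g x ∈ p.aroots L := by
    rw [mem_aroots] at hx' ⊢
    exact ⟨hx'.1, by rw [aeval_algEquiv, AlgHom.comp_apply, hx'.2, map_zero]⟩
  simpa [hp] using hgx

theorem normal_adjoin_simple_of_mem [IsAlgClosed L] (hp : (minpoly F a₁).aroots L = {a₁, a₂, a₃})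
    (ha₂ : a₂ ∈ F⟮a₁⟯) : Normal F F⟮a₁⟯ := by
  have hint : IsIntegral F a₁ := by
    by_contra h
    simp [minpoly.eq_zero h] at hp
  have hsplit : ((minpoly F a₁).map (algebraMap F L)).Splits := IsAlgClosed.splits _
  have hsum : a₁ + a₂ + a₃ = algebraMap F L (-(minpoly F a₁).nextCoeff) := by
    have := hsplit.nextCoeff_eq_neg_sum_roots_of_monic ((minpoly.monic hint).map _)
    rw [← aroots_def, hp, nextCoeff_map (algebraMap F L).injective] at this
    simp [this, add_assoc]
  have ha₃ : a₃ ∈ F⟮a₁⟯ := by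
    rw [show a₃ = algebraMap F L (-(minpoly F a₁).nextCoeff) - a₁ - a₂ by
      linear_combination hsum]
    exact sub_mem (sub_mem (IntermediateField.algebraMap_mem _ _) (mem_adjoin_simple_self F a₁)) ha₂
  have hrootSet : (minpoly F a₁).rootSet L = {a₁, a₂, a₃} := by
    classical
    ext x
    simp [rootSet_def, hp]
  have hadjoin : adjoin F ((minpoly F a₁).rootSet L) = F⟮a₁⟯ := by
    rw [hrootSet]
    refine le_antisymm ?_ (adjoin.mono _ _ _ (by simp))
    simp [adjoin_le_iff, Set.insert_subset_iff, mem_adjoin_simple_self, ha₂, ha₃]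
  have := adjoin_rootSet_isSplittingField hsplit
  rw [← hadjoin]
  exact Normal.of_isSplittingField (minpoly F a₁)

end Roots

section Galois

variable {F L : Type*} [Field F] [Field L] [Algebra F L] [IsGalois F L] {a₁ a₂ a₃ : L}

theorem exists_algEquiv_transposition (hp : (minpoly F a₁).aroots L = {a₁, a₂, a₃})
    (ha₂ : a₂ ∉ F⟮a₁⟯) : ∃ τ : Gal(L/F), τ a₁ = a₁ ∧ τ a₂ = a₃ ∧ τ a₃ = a₂ := by
  obtain ⟨f, hf⟩ : ∃ f : Gal(L/F⟮a₁⟯), f a₂ ≠ a₂ := by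
    by_contra! hfix
    obtain ⟨y, rfl⟩ := (InfiniteGalois.mem_bot_iff_fixed a₂).mpr hfix
    exact ha₂ y.2
  set τ : Gal(L/F) := f.restrictScalars F
  have hτ₁ : τ a₁ = a₁ := f.commutes ⟨a₁, mem_adjoin_simple_self F a₁⟩
  have hτ₂ : τ a₂ ≠ a₂ := hf
  have hperm (x) := algEquiv_apply_eq_of_aroots_eq_triple hp τ (x := x)
  have hne := ne_of_aroots_eq_triple (Algebra.IsSeparable.isSeparable F a₁) hp
  exact ⟨τ, hτ₁, by grind [hperm a₂ (by simp), hperm a₃ (by simp), τ.injective.eq_iff]⟩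

theorem exists_algEquiv_three_cycle (hp : (minpoly F a₁).aroots L = {a₁, a₂, a₃})
    (ha₂ : a₂ ∉ F⟮a₁⟯) : ∃ σ : Gal(L/F), σ a₁ = a₂ ∧ σ a₂ = a₃ ∧ σ a₃ = a₁ := by
  have hint := Algebra.IsIntegral.isIntegral (R := F) a₁
  have hminpoly : minpoly F a₂ = minpoly F a₁ :=
    (minpoly.eq_of_irreducible_of_monic (minpoly.irreducible hint)
      (mem_aroots.mp (hp ▸ by simp : a₂ ∈ (minpoly F a₁).aroots L)).2 (minpoly.monic hint)).symm
  obtain ⟨g, hg₁ : g a₁ = a₂⟩ := (Normal.minpoly_eq_iff_mem_orbit L).mp hminpoly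
  obtain ⟨τ, hτ₁, hτ₂, hτ₃⟩ := exists_algEquiv_transposition hp ha₂
  have hperm (x) := algEquiv_apply_eq_of_aroots_eq_triple hp g (x := x)
  have hne := ne_of_aroots_eq_triple (Algebra.IsSeparable.isSeparable F a₁) hp
  have hg₂ := hperm a₂ (by simp)
  have hg₃ := hperm a₃ (by simp)
  by_cases hg₂₃ : g a₂ = a₃
  · exact ⟨g, hg₁, hg₂₃, by grind [g.injective.eq_iff]⟩
  · refine ⟨g * τ, by simp [hτ₁, hg₁], ?_, ?_⟩ <;> simp only [AlgEquiv.mul_apply, hτ₂, hτ₃] <;>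
      grind [g.injective.eq_iff]

theorem pow_three_eq_one_of_add_mul_add_mul_eq_zero {e₂ e₃ : L}
    (hp : (minpoly F a₁).aroots L = {a₁, a₂, a₃}) (ha₂ : a₂ ∉ F⟮a₁⟯)
    (h₁ : a₁ ≠ 0) (h₂ : a₂ ≠ 0) (h₃ : a₃ ≠ 0) (hcube : a₁ ^ 3 ≠ a₂ ^ 3)
    (he₂ : IsOfFinOrder e₂) (he₃ : IsOfFinOrder e₃) (hrel : a₁ + a₂ * e₂ + a₃ * e₃ = 0) :
    e₂ ^ 3 = 1 ∧ e₃ ^ 3 = 1 := by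
  obtain ⟨σ, hσ₁, hσ₂, hσ₃⟩ := exists_algEquiv_three_cycle hp ha₂
  obtain ⟨τ, hτ₁, hτ₂, hτ₃⟩ := exists_algEquiv_transposition hp ha₂
  set n := orderOf e₂ * orderOf e₃
  have : NeZero n := ⟨(Nat.mul_pos he₂.orderOf_pos he₃.orderOf_pos).ne'⟩
  have he₂n : e₂ ^ n = 1 := by rw [pow_mul, pow_orderOf_eq_one, one_pow]
  have he₃n : e₃ ^ n = 1 := by rw [pow_mul', pow_orderOf_eq_one, one_pow]
  obtain ⟨u, hu⟩ := exists_map_eq_zpow_of_pow_eq_one σ n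
  obtain ⟨v, hv⟩ := exists_map_eq_zpow_of_pow_eq_one τ n
  have hσrel : a₂ + a₃ * e₂ ^ u + a₁ * e₃ ^ u = 0 := by
    simpa [hσ₁, hσ₂, hσ₃, hu _ he₂n, hu _ he₃n] using congrArg σ hrel
  have hτrel : a₁ + a₃ * e₂ ^ v + a₂ * e₃ ^ v = 0 := by
    simpa [hτ₁, hτ₂, hτ₃, hv _ he₂n, hv _ he₃n] using congrArg τ hrel
  have hc₂ : e₂ ∈ cyclotomicSubfield L := Subfield.subset_closure he₂
  have hc₃ : e₃ ∈ cyclotomicSubfield L := Subfield.subset_closure he₃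
  obtain ⟨hσ₂₃, hσ₃₂⟩ := eq_zero_of_mul_add_mul_eq_zero h₁ h₂ h₃ hσ₁ hσ₂ hσ₃ hτ₁ hτ₂ hτ₃ hcube
    (sub_mem (mul_mem hc₂ (zpow_mem hc₃ u)) (one_mem _))
    (sub_mem (mul_mem hc₃ (zpow_mem hc₃ u)) (zpow_mem hc₂ u))
    (by linear_combination e₃ ^ u * hrel - hσrel)
  obtain ⟨hτ₂₃, hτ₃₂⟩ := eq_zero_of_mul_add_mul_eq_zero h₁ h₂ h₃ hσ₁ hσ₂ hσ₃ hτ₁ hτ₂ hτ₃ hcube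
    (sub_mem hc₂ (zpow_mem hc₃ v)) (sub_mem hc₃ (zpow_mem hc₂ v))
    (by linear_combination hrel - hτrel)
  obtain ⟨ε₂, rfl⟩ := he₂.isUnit
  obtain ⟨ε₃, rfl⟩ := he₃.isUnit
  obtain ⟨hε₂, hε₃⟩ := pow_three_eq_one_of_zpow_relations (x := ε₂) (y := ε₃) (u := u) (v := v)
    (Units.ext (by push_cast; linear_combination hτ₂₃))
    (Units.ext (by push_cast; linear_combination hτ₃₂))
    (Units.ext (by push_cast; linear_combination hσ₂₃))
    (Units.ext (by push_cast; linear_combination -hσ₃₂))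
  exact ⟨by simpa using congrArg Units.val hε₂, by simpa using congrArg Units.val hε₃⟩

end Galois

theorem pow_three_eq_one_of_add_mul_add_mul_eq_zero_of_isAlgClosed {F Ω : Type*} [Field F]
    [CharZero F] [Field Ω] [Algebra F Ω] [IsAlgClosed Ω] {α₁ α₂ α₃ η₂ η₃ : Ω}
    (hp : (minpoly F α₁).aroots Ω = {α₁, α₂, α₃}) (hα₂ : α₂ ∉ F⟮α₁⟯)
    (h₁ : α₁ ≠ 0) (h₂ : α₂ ≠ 0) (h₃ : α₃ ≠ 0) (hcube : α₁ ^ 3 ≠ α₂ ^ 3)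
    (hη₂ : IsOfFinOrder η₂) (hη₃ : IsOfFinOrder η₃) (hrel : α₁ + α₂ * η₂ + α₃ * η₃ = 0) :
    η₂ ^ 3 = 1 ∧ η₃ ^ 3 = 1 := by
  -- `Ω` itself need not be algebraic over `F`, so we work in the Galois extension `L` of `F`
  set L := algebraicClosure F Ω
  have : IsAlgClosed L := IsAlgClosure.isAlgClosed F
  have hroot : ∀ {x}, x ∈ (minpoly F α₁).aroots Ω → x ∈ L := fun hx =>
    mem_algebraicClosure_iff.mpr ⟨_, (mem_aroots.mp hx).1, (mem_aroots.mp hx).2⟩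
  have horder : ∀ {η : Ω}, IsOfFinOrder η → η ∈ L := fun hη =>
    IsIntegral.of_pow hη.orderOf_pos (by rw [pow_orderOf_eq_one]; exact isIntegral_one)
  lift α₁ to L using hroot (by simp [hp])
  lift α₂ to L using hroot (by simp [hp])
  lift α₃ to L using hroot (by simp [hp])
  lift η₂ to L using horder hη₂
  lift η₃ to L using horder hη₃
  have hroots : (minpoly F α₁).aroots L = {α₁, α₂, α₃} := by
    apply Multiset.map_injective (algebraMap L Ω).injective
    rw [aroots_def, ← (IsAlgClosed.splits _).roots_map, Polynomial.map_map,
      ← IsScalarTower.algebraMap_eq, ← aroots_def, minpoly_eq, hp]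
    simp
  have hα₂' : α₂ ∉ F⟮α₁⟯ := fun h => hα₂ <| by
    have : L.val α₂ ∈ (F⟮α₁⟯).map L.val := ⟨α₂, h, rfl⟩
    rwa [adjoin_map, Set.image_singleton] at this
  have hval : Function.Injective (L.val : L →* Ω) := Subtype.val_injective
  obtain ⟨h₂₃, h₃₃⟩ := pow_three_eq_one_of_add_mul_add_mul_eq_zero hroots hα₂'
    (by exact_mod_cast h₁) (by exact_mod_cast h₂) (by exact_mod_cast h₃) (by exact_mod_cast hcube)
    (hval.isOfFinOrder_iff.mp hη₂) (hval.isOfFinOrder_iff.mp hη₃) (by exact_mod_cast hrel)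
  exact ⟨by exact_mod_cast h₂₃, by exact_mod_cast h₃₃⟩

theorem stmt_13_general (α α₁ α₂ α₃ ξ₁ ξ₂ ξ₃ : ℂ)
    (hα₁ : α₁ = α)
    (hint : IsIntegral ℚ α)
    (hconj : ((minpoly ℚ α).aroots ℂ) = {α₁, α₂, α₃})
    (hGal : ¬ Normal ℚ ℚ⟮α⟯)
    (hnz₁ : α₁ ≠ 0) (hnz₂ : α₂ ≠ 0) (hnz₃ : α₃ ≠ 0)
    (hξ₁ : ∃ k : ℕ, 0 < k ∧ ξ₁ ^ k = 1)
    (hξ₂ : ∃ k : ℕ, 0 < k ∧ ξ₂ ^ k = 1)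
    (hξ₃ : ∃ k : ℕ, 0 < k ∧ ξ₃ ^ k = 1)
    (K : IntermediateField ℚ ℂ)
    (hK : K = IntermediateField.adjoin ℚ {α₁, α₂, α₃, ξ₁, ξ₂, ξ₃})
    (hω : ¬ ∃ ω ∈ K, ω ≠ 1 ∧ ω ^ 3 = 1)
    (hr₂ : ξ₂ / ξ₁ ∈ K) (hr₃ : ξ₃ / ξ₁ ∈ K)
    (hsum : α₁ * ξ₁ + α₂ * ξ₂ + α₃ * ξ₃ = 0) :
    ξ₁ = ξ₂ ∧ ξ₂ = ξ₃ ∧ α₁ + α₂ + α₃ = 0 := by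
  subst hα₁
  have hcube_root : ∀ z ∈ K, z ^ 3 = 1 → z = 1 := fun z hz h3 => by
    by_contra hz₁
    exact hω ⟨z, hz, hz₁, h3⟩
  have hα₁K : α₁ ∈ K := hK ▸ subset_adjoin ℚ _ (by simp)
  have hα₂K : α₂ ∈ K := hK ▸ subset_adjoin ℚ _ (by simp)
  have h₁₂ := (ne_of_aroots_eq_triple (minpoly.irreducible hint).separable hconj).1
  have hcube : α₁ ^ 3 ≠ α₂ ^ 3 := fun h => h₁₂ <| (div_eq_one_iff_eq hnz₂).mp <|
    hcube_root _ (div_mem hα₁K hα₂K) (by rw [div_pow, h, div_self (pow_ne_zero 3 hnz₂)])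
  have hξ₁' := isOfFinOrder_iff_pow_eq_one.mpr hξ₁
  have hξ₂' := (isOfFinOrder_iff_pow_eq_one.mpr hξ₂).div₀ hξ₁'
  have hξ₃' := (isOfFinOrder_iff_pow_eq_one.mpr hξ₃).div₀ hξ₁'
  have hξ₁0 : ξ₁ ≠ 0 := hξ₁'.isUnit.ne_zero
  obtain ⟨h₂, h₃⟩ := pow_three_eq_one_of_add_mul_add_mul_eq_zero_of_isAlgClosed hconj
    (fun h => hGal (normal_adjoin_simple_of_mem hconj h)) hnz₁ hnz₂ hnz₃ hcube hξ₂' hξ₃'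
    (by field_simp; linear_combination hsum)
  obtain rfl : ξ₂ = ξ₁ := (div_eq_one_iff_eq hξ₁0).mp (hcube_root _ hr₂ h₂)
  obtain rfl : ξ₃ = ξ₂ := (div_eq_one_iff_eq hξ₁0).mp (hcube_root _ hr₃ h₃)
  refine ⟨rfl, rfl, ?_⟩
  exact (mul_eq_zero.mp (by linear_combination hsum)).resolve_right hξ₁0

theorem stmt_13 (α α₁ α₂ α₃ ξ₁ ξ₂ ξ₃ : ℂ)
    (hα₁ : α₁ = α)
    (hint : IsIntegral ℚ α)
    (hdeg : (minpoly ℚ α).natDegree = 3)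
    (hconj : ((minpoly ℚ α).aroots ℂ) = {α₁, α₂, α₃})
    (hGal : ¬ Normal ℚ ℚ⟮α⟯)
    (hnz₁ : α₁ ≠ 0) (hnz₂ : α₂ ≠ 0) (hnz₃ : α₃ ≠ 0)
    (hξ₁ : ∃ k : ℕ, 0 < k ∧ ξ₁ ^ k = 1)
    (hξ₂ : ∃ k : ℕ, 0 < k ∧ ξ₂ ^ k = 1)
    (hξ₃ : ∃ k : ℕ, 0 < k ∧ ξ₃ ^ k = 1)
    (K : IntermediateField ℚ ℂ)
    (hK : K = IntermediateField.adjoin ℚ {α₁, α₂, α₃, ξ₁, ξ₂, ξ₃})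
    (hω : ¬ ∃ ω ∈ K, ω ≠ 1 ∧ ω ^ 3 = 1)
    (hr₂ : ξ₂ / ξ₁ ∈ K) (hr₃ : ξ₃ / ξ₁ ∈ K)
    (hsum : α₁ * ξ₁ + α₂ * ξ₂ + α₃ * ξ₃ = 0) :
    ξ₁ = ξ₂ ∧ ξ₂ = ξ₃ ∧ α₁ + α₂ + α₃ = 0 :=
  stmt_13_general α α₁ α₂ α₃ ξ₁ ξ₂ ξ₃ hα₁ hint hconj hGal hnz₁ hnz₂ hnz₃ hξ₁ hξ₂ hξ₃ K hK hω hr₂ hr₃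
    hsum
end
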